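/- For every real β > 0 and every natural number k ≠ 1, the series Σ_{l=0}^{∞} q(β,k,l) converges absolutely; writing Q(β,k) for its sum, one has Q(β+1,k) = ((2β+k+1)/(4(2β+k+4))) · Q(β,k). -/

import Mathlib

/-!
Write `q(β,k,l) = w(l) h(l)` with `w` rational and
`h(l) = (2l)! Γ(β+k+l+1)² / (Γ(2β+2k+2l+2) (l!)²)` hypergeometric; `h` is positive and
decreasing in `l`, and `h(β+1,k,l)/h(β,k,l)` is rational.
Zeilberger's certificate `G(l) = -l h(l) / ((2l-1)(2β+k+2l+1)(β+k+l))` satisfies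
`4(2β+k+4) q(β+1,k,l) - (2β+k+1) q(β,k,l) = G(l+1) - G(l)`, a rational identity once `h` is
factored out. Since `G(0) = 0` and `|G(l)| ≤ h(0)/l`, summing over `l` telescopes to `0`;
absolute convergence comes from `|q(l)| ≤ h(0)/l²`.
-/

noncomputable def qZeil (β : ℝ) (k l : ℕ) : ℝ :=
  ((Nat.factorial (2 * l) : ℝ) / (2 * (l : ℝ) - 1)) * (β + (k : ℝ) + 2 * (l : ℝ)) *
    (Real.Gamma (β + (k : ℝ) + (l : ℝ) + 1)) ^ 2 /
    (((k : ℝ) + 2 * (l : ℝ) - 1) * (2 * β + (k : ℝ) + 2 * (l : ℝ) + 1) *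
      (β + (k : ℝ) + (l : ℝ)) * Real.Gamma (2 * β + 2 * (k : ℝ) + 2 * (l : ℝ) + 2) *
      (Nat.factorial l : ℝ) ^ 2)

open Filter Topology Finset

theorem tsum_eq_sub_of_telescoping {G : Type*} [AddCommGroup G] [TopologicalSpace G]
    [IsTopologicalAddGroup G] [T2Space G] {f g : ℕ → G} (hf : Summable f)
    (hfg : ∀ n, f n = g (n + 1) - g n) {a : G} (hg : Tendsto g atTop (𝓝 a)) :
    ∑' n, f n = a - g 0 := by
  refine tendsto_nhds_unique hf.hasSum.tendsto_sum_nat ?_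
  simp_rw [hfg, sum_range_sub]
  exact (hg.comp (tendsto_add_atTop_nat 0)).sub_const _

theorem Real.Gamma_add_two {x : ℝ} (hx : 0 < x) :
    Real.Gamma (x + 2) = (x + 1) * x * Real.Gamma x := by
  rw [show x + 2 = x + 1 + 1 by ring, Real.Gamma_add_one (by positivity),
    Real.Gamma_add_one hx.ne', mul_assoc]

noncomputable def qKernel (β : ℝ) (k l : ℕ) : ℝ :=
  (Nat.factorial (2 * l) : ℝ) * Real.Gamma (β + k + l + 1) ^ 2 /
    (Real.Gamma (2 * β + 2 * k + 2 * l + 2) * (Nat.factorial l : ℝ) ^ 2)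

noncomputable def qWeight (β : ℝ) (k l : ℕ) : ℝ :=
  (β + k + 2 * l) / ((2 * l - 1) * (k + 2 * l - 1) * (2 * β + k + 2 * l + 1) * (β + k + l))

noncomputable def qCertificate (β : ℝ) (k l : ℕ) : ℝ :=
  -l / ((2 * l - 1) * (2 * β + k + 2 * l + 1) * (β + k + l)) * qKernel β k l

theorem qZeil_eq_qWeight_mul_qKernel (β : ℝ) (k l : ℕ) :
    qZeil β k l = qWeight β k l * qKernel β k l := by
  simp only [qZeil, qWeight, qKernel, div_eq_mul_inv, mul_inv]
  ring

section Kernel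

variable {β : ℝ} (hβ : -1 < β) (k : ℕ)
include hβ

theorem add_natCast_add_natCast_add_one_pos (l : ℕ) : 0 < β + k + l + 1 := by
  have := (Nat.cast_nonneg (α := ℝ) k)
  have := (Nat.cast_nonneg (α := ℝ) l)
  linarith

theorem qKernel_pos (l : ℕ) : 0 < qKernel β k l := by
  have hs := add_natCast_add_natCast_add_one_pos hβ k l
  have := Real.Gamma_pos_of_pos (s := 2 * β + 2 * k + 2 * l + 2) (by linarith)
  unfold qKernel
  positivity

-- `2 * (β + k + l) + 3` is the form `field_simp` normalizes this factor to; written otherwise,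
-- it would not cancel in `qZeil_telescoping`.
theorem qKernel_succ (l : ℕ) :
    qKernel β k (l + 1) =
      (2 * l + 1) * (β + k + l + 1) / ((l + 1) * (2 * (β + k + l) + 3)) * qKernel β k l := by
  have hs := add_natCast_add_natCast_add_one_pos hβ k l
  have hΓ := Real.Gamma_pos_of_pos (s := 2 * β + 2 * k + 2 * l + 2) (by linarith)
  have h3 : 2 * (β + k + l) + 3 ≠ 0 := by linarith
  unfold qKernel
  push_cast
  rw [show β + k + (l + 1) + 1 = β + k + l + 1 + 1 by ring, Real.Gamma_add_one hs.ne',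
    show 2 * β + 2 * k + 2 * (l + 1) + 2 = 2 * β + 2 * k + 2 * l + 2 + 2 by ring,
    Real.Gamma_add_two (by linarith),
    show 2 * β + 2 * k + 2 * l + 2 + 1 = 2 * (β + k + l) + 3 by ring,
    show 2 * (l + 1) = 2 * l + 1 + 1 by ring,
    Nat.factorial_succ, Nat.factorial_succ, Nat.factorial_succ]
  push_cast
  field_simp
  ring

theorem qKernel_add_one (l : ℕ) :
    qKernel (β + 1) k l = (β + k + l + 1) / (2 * (2 * (β + k + l) + 3)) * qKernel β k l := by
  have hs := add_natCast_add_natCast_add_one_pos hβ k l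
  have hΓ := Real.Gamma_pos_of_pos (s := 2 * β + 2 * k + 2 * l + 2) (by linarith)
  have h3 : 2 * (β + k + l) + 3 ≠ 0 := by linarith
  unfold qKernel
  rw [show β + 1 + k + l + 1 = β + k + l + 1 + 1 by ring, Real.Gamma_add_one hs.ne',
    show 2 * (β + 1) + 2 * k + 2 * l + 2 = 2 * β + 2 * k + 2 * l + 2 + 2 by ring,
    Real.Gamma_add_two (by linarith),
    show 2 * β + 2 * k + 2 * l + 2 + 1 = 2 * (β + k + l) + 3 by ring]
  field_simp

theorem qKernel_antitone : Antitone (qKernel β k) := by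
  refine antitone_nat_of_succ_le fun l => ?_
  have hs := add_natCast_add_natCast_add_one_pos hβ k l
  rw [qKernel_succ hβ]
  refine mul_le_of_le_one_left (qKernel_pos hβ k l).le ?_
  rw [div_le_one (by nlinarith)]
  nlinarith

end Kernel

theorem qCertificate_zero (β : ℝ) (k : ℕ) : qCertificate β k 0 = 0 := by
  simp [qCertificate]

theorem qZeil_telescoping {β : ℝ} (hβ : 0 < β) {k : ℕ} (hk : k ≠ 1) (l : ℕ) :
    4 * (2 * β + k + 4) * qZeil (β + 1) k l - (2 * β + k + 1) * qZeil β k l =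
      qCertificate β k (l + 1) - qCertificate β k l := by
  have hl : (2 * l - 1 : ℝ) ≠ 0 := by
    intro h
    have : ((2 * l : ℕ) : ℝ) = 1 := by push_cast; linarith
    norm_cast at this
    omega
  have hkl : (k + 2 * l - 1 : ℝ) ≠ 0 := by
    intro h
    have : ((k + 2 * l : ℕ) : ℝ) = 1 := by push_cast; linarith
    norm_cast at this
    omega
  have hl0 := Nat.cast_nonneg (α := ℝ) l
  have h1 : (2 * (l + 1) - 1 : ℝ) ≠ 0 := by linarith
  have h2 : (β + k + l : ℝ) ≠ 0 := by positivity
  have h2' : (β + k + (l + 1) : ℝ) ≠ 0 := by positivity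
  have h2'' : (β + 1 + k + l : ℝ) ≠ 0 := by positivity
  have h3 : (2 * β + k + 2 * l + 1 : ℝ) ≠ 0 := by positivity
  have h4 : (2 * (β + 1) + k + 2 * l + 1 : ℝ) ≠ 0 := by positivity
  have h4' : (2 * β + k + 2 * (l + 1) + 1 : ℝ) ≠ 0 := by positivity
  have h5 : (2 * (β + k + l) + 3 : ℝ) ≠ 0 := by positivity
  have h6 : (β + k + l + 1 : ℝ) ≠ 0 := by positivity
  have h7 : (l + 1 : ℝ) ≠ 0 := by positivity
  rw [qZeil_eq_qWeight_mul_qKernel, qZeil_eq_qWeight_mul_qKernel, qKernel_add_one (by linarith),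
    qCertificate, qCertificate, qKernel_succ (by linarith)]
  simp only [qWeight]
  push_cast
  field_simp
  ring

section Bounds

variable {β : ℝ} (hβ : 0 < β) (k : ℕ)
include hβ

theorem abs_qZeil_le {l : ℕ} (hl : 1 ≤ l) : |qZeil β k l| ≤ qKernel β k 0 / l ^ 2 := by
  have hl' : (1 : ℝ) ≤ l := by exact_mod_cast hl
  have hk0 := Nat.cast_nonneg (α := ℝ) k
  have hK := qKernel_pos (by linarith : -1 < β) k l
  have hlk : (l : ℝ) * l ≤ (2 * l - 1) * (k + 2 * l - 1) :=
    mul_le_mul (by linarith) (by linarith) (by linarith) (by linarith)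
  have hden :
      0 < (2 * l - 1 : ℝ) * (k + 2 * l - 1) * (2 * β + k + 2 * l + 1) * (β + k + l) := by
    have : 0 < (2 * l - 1 : ℝ) * (k + 2 * l - 1) := by nlinarith
    have : 0 < β + k + l := by linarith
    positivity
  have hweight_nonneg : 0 ≤ qWeight β k l := div_nonneg (by positivity) hden.le
  have hweight_le : qWeight β k l ≤ 1 / l ^ 2 := by
    rw [qWeight, div_le_div_iff₀ hden (by positivity)]
    have : β + k + 2 * l ≤ (2 * β + k + 2 * l + 1) * (β + k + l) := by nlinarith
    nlinarith [mul_le_mul this hlk (by positivity) (by positivity)]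
  rw [qZeil_eq_qWeight_mul_qKernel, abs_mul, abs_of_nonneg hweight_nonneg, abs_of_pos hK]
  calc qWeight β k l * qKernel β k l ≤ 1 / l ^ 2 * qKernel β k 0 :=
        mul_le_mul hweight_le (qKernel_antitone (by linarith) k (Nat.zero_le l)) hK.le
          (by positivity)
    _ = qKernel β k 0 / l ^ 2 := one_div_mul_eq_div _ _

theorem summable_abs_qZeil : Summable fun l => |qZeil β k l| := by
  refine Summable.of_norm_bounded_eventually_nat
    ((Real.summable_one_div_nat_pow.2 one_lt_two).mul_left (qKernel β k 0)) ?_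
  filter_upwards [eventually_ge_atTop 1] with l hl
  rw [Real.norm_eq_abs, abs_abs, mul_one_div]
  exact abs_qZeil_le hβ k hl

theorem abs_qCertificate_le {l : ℕ} (hl : 1 ≤ l) :
    |qCertificate β k l| ≤ qKernel β k 0 / l := by
  have hl' : (1 : ℝ) ≤ l := by exact_mod_cast hl
  have hk0 := Nat.cast_nonneg (α := ℝ) k
  have hK := qKernel_pos (by linarith : -1 < β) k l
  have hll : (l : ℝ) * l ≤ (2 * l - 1) * (2 * β + k + 2 * l + 1) :=
    mul_le_mul (by linarith) (by linarith) (by linarith) (by linarith)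
  have hden : 0 < (2 * l - 1 : ℝ) * (2 * β + k + 2 * l + 1) * (β + k + l) := by
    have : 0 < (2 * l - 1 : ℝ) * (2 * β + k + 2 * l + 1) := by nlinarith
    have : 0 < β + k + l := by linarith
    positivity
  have hcoef :
      |-(l : ℝ) / ((2 * l - 1) * (2 * β + k + 2 * l + 1) * (β + k + l))| ≤ 1 / l := by
    rw [abs_div, abs_neg, Nat.abs_cast, abs_of_pos hden, div_le_div_iff₀ hden (by positivity)]
    nlinarith [mul_le_mul hll (by linarith : 1 ≤ β + k + l) zero_le_one
      ((mul_self_nonneg _).trans hll)]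
  rw [qCertificate, abs_mul, abs_of_pos hK]
  calc _ ≤ 1 / l * qKernel β k 0 :=
        mul_le_mul hcoef (qKernel_antitone (by linarith) k (Nat.zero_le l)) hK.le (by positivity)
    _ = qKernel β k 0 / l := one_div_mul_eq_div _ _

theorem tendsto_qCertificate : Tendsto (qCertificate β k) atTop (𝓝 0) := by
  refine squeeze_zero_norm' ?_ (tendsto_const_div_atTop_nhds_zero_nat (qKernel β k 0))
  filter_upwards [eventually_ge_atTop 1] with l hl
  exact abs_qCertificate_le hβ k hl

end Bounds

/-- `Σ_l q(β,k,l)` converges absolutely, and writing `Q(β,k)` for its sum,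
`Q(β+1,k) = ((2β+k+1)/(4(2β+k+4))) Q(β,k)`. -/
theorem q_sum_recurrence_beta (β : ℝ) (hβ : 0 < β) (k : ℕ) (hk : k ≠ 1) :
    Summable (fun l : ℕ => |qZeil β k l|) ∧
    (∑' l : ℕ, qZeil (β + 1) k l)
      = ((2 * β + (k : ℝ) + 1) / (4 * (2 * β + (k : ℝ) + 4))) * ∑' l : ℕ, qZeil β k l := by
  have hsum := (summable_abs_qZeil hβ k).of_abs
  have hsum₁ := (summable_abs_qZeil (by linarith : 0 < β + 1) k).of_abs
  have htele := tsum_eq_sub_of_telescoping ((hsum₁.mul_left _).sub (hsum.mul_left _))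
    (qZeil_telescoping hβ hk) (tendsto_qCertificate hβ k)
  rw [hsum₁.mul_left _ |>.tsum_sub (hsum.mul_left _), tsum_mul_left, tsum_mul_left,
    qCertificate_zero, sub_zero, sub_eq_zero] at htele
  refine ⟨summable_abs_qZeil hβ k, ?_⟩
  rw [div_mul_eq_mul_div, eq_div_iff (by positivity), mul_comm, htele]
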